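/- For 1 < p < n+1 and p' = n−p+2, the operator C_n satisfies C_n^{p'}·Z₁·C_n^{−p'} = Z_{n−p+1}·X_{n−p+2}, i.e., repeated application of C_n propagates a Z on the first qubit to a nearest-neighbour Z⊗X pair at position n−p+1, n−p+2. -/

import Mathlib

/-!
Conjugation by the chain of controlled-`Z` gates fixes every `Z_i` and sends `X_i` to
`X_i Z_{i-1} Z_{i+1}` (flipping qubit `i` changes the sign of exactly the edges at `i`), and the
Hadamard layer swaps `X` and `Z`. Hence `C_n` maps `Z_i ↦ X_i`, `X_0 ↦ Z_0 X_1` and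
`X_i ↦ X_{i-1} Z_i X_{i+1}`. Two steps take `Z_0` to `Z_0 X_1`, and every further step moves the
pair `Z_m X_{m+1}` one site to the right, because the `X_m` coming from `Z_m` cancels the one
coming from `X_{m+1}`. Qubits are numbered from `0`, so the paper's `Z₁` is `op 0 PZ` and its
pair at positions `n-p+1, n-p+2` sits on qubits `n-p, n-p+1`.
-/

open Matrix Kronecker

noncomputable section

/-- Pauli X -/
def PX : Matrix (Fin 2) (Fin 2) ℂ := !![0, 1; 1, 0]
/-- Pauli Z -/
def PZ : Matrix (Fin 2) (Fin 2) ℂ := !![1, 0; 0, -1]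
/-- Hadamard -/
def Hg : Matrix (Fin 2) (Fin 2) ℂ := (((Real.sqrt 2 : ℝ) : ℂ))⁻¹ • !![1, 1; 1, -1]
/-- Controlled-Z: |0⟩⟨0|⊗I + |1⟩⟨1|⊗Z -/
def CZ : Matrix (Fin 2 × Fin 2) (Fin 2 × Fin 2) ℂ :=
  (Matrix.single 0 0 1) ⊗ₖ (1 : Matrix (Fin 2) (Fin 2) ℂ)
    + (Matrix.single 1 1 1) ⊗ₖ PZ
/-- CNOT: |0⟩⟨0|⊗I + |1⟩⟨1|⊗X -/
def CNOT : Matrix (Fin 2 × Fin 2) (Fin 2 × Fin 2) ℂ :=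
  (Matrix.single 0 0 1) ⊗ₖ (1 : Matrix (Fin 2) (Fin 2) ℂ)
    + (Matrix.single 1 1 1) ⊗ₖ PX
/-- R_Z(θ) = exp(-i(θ/2)Z) -/
def RZ (θ : ℝ) : Matrix (Fin 2) (Fin 2) ℂ :=
  NormedSpace.exp ((((-θ/2 : ℝ) : ℂ) * Complex.I) • PZ)
/-- R_X(θ) = exp(-i(θ/2)X) -/
def RX (θ : ℝ) : Matrix (Fin 2) (Fin 2) ℂ :=
  NormedSpace.exp ((((-θ/2 : ℝ) : ℂ) * Complex.I) • PX)
/-- R_{ZX}(α) = exp(-i(α/2) Z⊗X) -/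
def RZX (α : ℝ) : Matrix (Fin 2 × Fin 2) (Fin 2 × Fin 2) ℂ :=
  NormedSpace.exp ((((-α/2 : ℝ) : ℂ) * Complex.I) • (PZ ⊗ₖ PX))
/-- |+⟩ -/
def ketPlus : Fin 2 → ℂ := (((Real.sqrt 2 : ℝ) : ℂ))⁻¹ • (fun _ : Fin 2 => (1 : ℂ))
/-- |−⟩ -/
def ketMinus : Fin 2 → ℂ :=
  (((Real.sqrt 2 : ℝ) : ℂ))⁻¹ • (fun j : Fin 2 => if j = 0 then (1 : ℂ) else -1)
/-- Tensor product of single-qubit vectors -/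
def tens (u v : Fin 2 → ℂ) : Fin 2 × Fin 2 → ℂ := fun p => u p.1 * v p.2
/-- C₂ = (H⊗H)·CZ -/
def C2 : Matrix (Fin 2 × Fin 2) (Fin 2 × Fin 2) ℂ := (Hg ⊗ₖ Hg) * CZ

/-- Single-qubit operator `A` acting on qubit `i` of `n` qubits (identity elsewhere). -/
def op {n : ℕ} (i : Fin n) (A : Matrix (Fin 2) (Fin 2) ℂ) :
    Matrix (Fin n → Fin 2) (Fin n → Fin 2) ℂ :=
  fun f g => ∏ j, if j = i then A (f j) (g j) else if f j = g j then 1 else 0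

/-- ⊗_i H_i on n qubits. -/
def Hall (n : ℕ) : Matrix (Fin n → Fin 2) (Fin n → Fin 2) ℂ :=
  fun f g => ∏ j, Hg (f j) (g j)

/-- ∏_{i=1}^{n-1} CZ_{i,i+1} on n qubits (a diagonal matrix). -/
def CZall (n : ℕ) : Matrix (Fin n → Fin 2) (Fin n → Fin 2) ℂ :=
  Matrix.diagonal fun f => ∏ j : Fin n,
    if h : (j : ℕ) + 1 < n then
      (if f j = 1 ∧ f ⟨(j : ℕ) + 1, h⟩ = 1 then (-1 : ℂ) else 1)
    else 1

/-- C_n = (⊗_i H_i)·(∏_i CZ_{i,i+1}) -/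
def Cn (n : ℕ) : Matrix (Fin n → Fin 2) (Fin n → Fin 2) ℂ := Hall n * CZall n

section PiKron

variable {ι m R : Type*} [Fintype ι] [CommSemiring R]

def piKron (M : ι → Matrix m m R) : Matrix (ι → m) (ι → m) R :=
  of fun f g => ∏ j, M j (f j) (g j)

@[simp]
lemma piKron_apply (M : ι → Matrix m m R) (f g : ι → m) :
    piKron M f g = ∏ j, M j (f j) (g j) := rfl

lemma piKron_mul [DecidableEq ι] [Fintype m] (M N : ι → Matrix m m R) :
    piKron M * piKron N = piKron (M * N) := by
  ext f g
  simp only [mul_apply, piKron_apply, Pi.mul_apply, Finset.prod_univ_sum, Fintype.piFinset_univ,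
    Finset.prod_mul_distrib]

lemma piKron_diagonal [DecidableEq ι] [DecidableEq m] (d : ι → m → R) :
    piKron (fun j => diagonal (d j)) = diagonal fun f => ∏ j, d j (f j) := by
  ext f g
  by_cases hfg : f = g
  · simp [hfg]
  · obtain ⟨j, hj⟩ := Function.ne_iff.mp hfg
    rw [diagonal_apply_ne _ hfg, piKron_apply]
    exact Finset.prod_eq_zero (Finset.mem_univ j) (diagonal_apply_ne _ hj)

lemma piKron_one [DecidableEq ι] [DecidableEq m] : piKron (1 : ι → Matrix m m R) = 1 := by
  convert piKron_diagonal (fun (_ : ι) (_ : m) => (1 : R)) using 1 <;> simp [Pi.one_def]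

end PiKron

lemma PX_mul_PX : PX * PX = 1 := by
  ext i j; fin_cases i <;> fin_cases j <;> simp [PX]

lemma PZ_eq_diagonal : PZ = diagonal fun x => PZ x x := by
  ext i j; fin_cases i <;> fin_cases j <;> simp [PZ]

lemma Hg_mul_PZ : Hg * PZ = PX * Hg := by
  ext i j; fin_cases i <;> fin_cases j <;> simp [Hg, PX, PZ, mul_apply, Fin.sum_univ_two]

lemma Hg_mul_PX : Hg * PX = PZ * Hg := by
  ext i j; fin_cases i <;> fin_cases j <;> simp [Hg, PX, PZ, mul_apply, Fin.sum_univ_two]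

lemma Hg_mul_Hg : Hg * Hg = 1 := by
  have h : ((Real.sqrt 2 : ℝ) : ℂ)⁻¹ * ((Real.sqrt 2 : ℝ) : ℂ)⁻¹ = 2⁻¹ := by
    rw [← mul_inv, ← Complex.ofReal_mul, Real.mul_self_sqrt zero_le_two, Complex.ofReal_ofNat]
  ext i j; fin_cases i <;> fin_cases j <;> simp [Hg, mul_apply, Fin.sum_univ_two, h] <;> norm_num

section Qubits

variable {n : ℕ}

lemma op_eq_piKron (i : Fin n) (A : Matrix (Fin 2) (Fin 2) ℂ) :
    op i A = piKron (Pi.mulSingle i A) := by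
  ext f g
  refine Finset.prod_congr rfl fun j _ => ?_
  by_cases hj : j = i <;> simp [hj, one_apply]

lemma op_mul_op_self (i : Fin n) (A B : Matrix (Fin 2) (Fin 2) ℂ) :
    op i A * op i B = op i (A * B) := by
  rw [op_eq_piKron, op_eq_piKron, op_eq_piKron, piKron_mul, Pi.mulSingle_mul]

lemma op_one (i : Fin n) : op i (1 : Matrix (Fin 2) (Fin 2) ℂ) = 1 := by
  rw [op_eq_piKron, Pi.mulSingle_one, piKron_one]

lemma op_mul_op_comm {i j : Fin n} (hij : i ≠ j) (A B : Matrix (Fin 2) (Fin 2) ℂ) :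
    op i A * op j B = op j B * op i A := by
  rw [op_eq_piKron, op_eq_piKron, piKron_mul, piKron_mul]
  exact congrArg piKron
    (Pi.mulSingle_commute (f := fun _ => Matrix (Fin 2) (Fin 2) ℂ) hij A B).eq

lemma op_PZ_eq_diagonal (i : Fin n) : op i PZ = diagonal fun f => PZ (f i) (f i) := by
  have h : Pi.mulSingle i PZ = fun j =>
      diagonal ((Pi.mulSingle i fun x => PZ x x : Fin n → Fin 2 → ℂ) j) := by
    funext j
    by_cases hj : j = i
    · subst hj; simpa using PZ_eq_diagonal
    · simp [hj]
  rw [op_eq_piKron, h, piKron_diagonal]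
  congr 1
  funext f
  rw [Fintype.prod_eq_single i fun j hj => by simp [hj], Pi.mulSingle_eq_same]

lemma Hall_mul_op {A B : Matrix (Fin 2) (Fin 2) ℂ} (h : Hg * A = B * Hg) (i : Fin n) :
    Hall n * op i A = op i B * Hall n := by
  change piKron (fun _ => Hg) * _ = _ * piKron (fun _ => Hg)
  rw [op_eq_piKron, op_eq_piKron, piKron_mul, piKron_mul]
  congr 1
  funext j
  by_cases hj : j = i
  · subst hj; simpa using h
  · simp [hj]

lemma Hall_mul_Hall : Hall n * Hall n = 1 := by
  change piKron (fun _ => Hg) * piKron (fun _ => Hg) = 1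
  rw [piKron_mul, ← piKron_one]
  congr 1
  funext j
  exact Hg_mul_Hg

lemma eq_update_of_op_PX_apply_ne_zero {i : Fin n} {f g : Fin n → Fin 2} (h : op i PX f g ≠ 0) :
    f = Function.update g i (g i).rev := by
  funext j
  have hj := Finset.prod_ne_zero_iff.mp h j (Finset.mem_univ j)
  by_cases hji : j = i
  · subst hji
    revert hj
    simp only [if_true, Function.update_self]
    generalize f j = x; generalize g j = y
    fin_cases x <;> fin_cases y <;> simp [PX]
  · simpa [hji] using hj

lemma diagonal_mul_op_PX (d : (Fin n → Fin 2) → ℂ) (i : Fin n) :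
    diagonal d * op i PX = op i PX * diagonal fun g => d (Function.update g i (g i).rev) := by
  ext f g
  rw [diagonal_mul, mul_diagonal]
  by_cases h : op i PX f g = 0
  · simp [h]
  · rw [mul_comm, ← eq_update_of_op_PX_apply_ne_zero h]

end Qubits

section ControlledZ

variable {n : ℕ}

def czPhase (x y : Fin 2) : ℂ := if x = 1 ∧ y = 1 then -1 else 1

lemma czPhase_mul_self (x y : Fin 2) : czPhase x y * czPhase x y = 1 := by
  unfold czPhase; split_ifs <;> norm_num

lemma czPhase_rev_left (x y : Fin 2) : czPhase x.rev y = PZ y y * czPhase x y := by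
  fin_cases x <;> fin_cases y <;> simp [czPhase, PZ]

lemma czPhase_rev_right (x y : Fin 2) : czPhase x y.rev = PZ x x * czPhase x y := by
  fin_cases x <;> fin_cases y <;> simp [czPhase, PZ]

def czFactor (j : Fin n) (f : Fin n → Fin 2) : ℂ :=
  if h : (j : ℕ) + 1 < n then czPhase (f j) (f ⟨(j : ℕ) + 1, h⟩) else 1

def czSign (f : Fin n → Fin 2) : ℂ := ∏ j, czFactor j f

lemma CZall_eq_diagonal : CZall n = diagonal czSign := rfl

lemma czFactor_mul_self (j : Fin n) (f : Fin n → Fin 2) : czFactor j f * czFactor j f = 1 := by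
  unfold czFactor; split_ifs
  · exact czPhase_mul_self _ _
  · exact one_mul 1

lemma CZall_mul_CZall : CZall n * CZall n = 1 := by
  rw [CZall_eq_diagonal, diagonal_mul_diagonal, ← diagonal_one]
  congr 1
  funext f
  rw [czSign, ← Finset.prod_mul_distrib]
  exact Finset.prod_eq_one fun j _ => czFactor_mul_self j f

lemma CZall_mul_op_PZ (i : Fin n) : CZall n * op i PZ = op i PZ * CZall n := by
  rw [CZall_eq_diagonal, op_PZ_eq_diagonal, diagonal_mul_diagonal, diagonal_mul_diagonal]
  exact congrArg diagonal (funext fun f => mul_comm _ _)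

lemma czFactor_update_rev {i b : Fin n} (hb : (i : ℕ) + 1 = b) (j : Fin n) (g : Fin n → Fin 2) :
    czFactor j (Function.update g i (g i).rev)
      = (if (j : ℕ) + 1 = i then PZ (g j) (g j) else 1) * (if j = i then PZ (g b) (g b) else 1)
        * czFactor j g := by
  by_cases hji : j = i
  · subst hji
    have hlt : (j : ℕ) + 1 < n := hb ▸ b.isLt
    have hb' : (⟨(j : ℕ) + 1, hlt⟩ : Fin n) = b := Fin.ext hb
    have hbj : b ≠ j := fun e => by rw [e] at hb; omega
    rw [czFactor, czFactor, dif_pos hlt, dif_pos hlt, hb', Function.update_self,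
      Function.update_of_ne hbj, czPhase_rev_left, if_neg (by omega), if_pos rfl, one_mul]
  by_cases hlt : (j : ℕ) + 1 < n
  · by_cases hji' : (j : ℕ) + 1 = i
    · have hi' : (⟨(j : ℕ) + 1, hlt⟩ : Fin n) = i := Fin.ext hji'
      rw [czFactor, czFactor, dif_pos hlt, dif_pos hlt, hi', Function.update_self,
        Function.update_of_ne hji, czPhase_rev_right, if_pos hji', if_neg hji, mul_one]
    · have hne : (⟨(j : ℕ) + 1, hlt⟩ : Fin n) ≠ i := fun e => hji' (congrArg Fin.val e)
      rw [czFactor, czFactor, dif_pos hlt, dif_pos hlt, Function.update_of_ne hne,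
        Function.update_of_ne hji, if_neg hji', if_neg hji, one_mul, one_mul]
  · have hji' : (j : ℕ) + 1 ≠ i := fun h => hlt (h ▸ i.isLt)
    rw [czFactor, czFactor, dif_neg hlt, dif_neg hlt, if_neg hji', if_neg hji, one_mul, one_mul]

lemma czSign_update_rev {a i b : Fin n} (ha : (a : ℕ) + 1 = i) (hb : (i : ℕ) + 1 = b)
    (g : Fin n → Fin 2) :
    czSign (Function.update g i (g i).rev) = PZ (g a) (g a) * PZ (g b) (g b) * czSign g := by
  have hleft (j : Fin n) : (if (j : ℕ) + 1 = i then PZ (g j) (g j) else 1)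
      = if j = a then PZ (g a) (g a) else 1 := by
    by_cases hj : j = a
    · simp [hj, ha]
    · rw [if_neg hj, if_neg fun h => hj (Fin.ext (by omega))]
  simp only [czSign, czFactor_update_rev hb, hleft, Finset.prod_mul_distrib,
    Finset.prod_ite_eq', Finset.mem_univ, if_true]

lemma czSign_update_rev_zero {i b : Fin n} (hi : (i : ℕ) = 0) (hb : (i : ℕ) + 1 = b)
    (g : Fin n → Fin 2) :
    czSign (Function.update g i (g i).rev) = PZ (g b) (g b) * czSign g := by
  have hleft (j : Fin n) : (j : ℕ) + 1 ≠ i := by omega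
  simp only [czSign, czFactor_update_rev hb, hleft, Finset.prod_mul_distrib,
    Finset.prod_ite_eq', Finset.mem_univ, if_true, if_false, one_mul]

lemma CZall_mul_op_PX {a i b : Fin n} (ha : (a : ℕ) + 1 = i) (hb : (i : ℕ) + 1 = b) :
    CZall n * op i PX = op i PX * (op a PZ * op b PZ) * CZall n := by
  rw [CZall_eq_diagonal, diagonal_mul_op_PX, op_PZ_eq_diagonal, op_PZ_eq_diagonal,
    diagonal_mul_diagonal, mul_assoc, diagonal_mul_diagonal]
  exact congrArg _ (congrArg diagonal (funext (czSign_update_rev ha hb)))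

lemma CZall_mul_op_PX_zero {i b : Fin n} (hi : (i : ℕ) = 0) (hb : (i : ℕ) + 1 = b) :
    CZall n * op i PX = op i PX * op b PZ * CZall n := by
  rw [CZall_eq_diagonal, diagonal_mul_op_PX, op_PZ_eq_diagonal, mul_assoc, diagonal_mul_diagonal]
  exact congrArg _ (congrArg diagonal (funext (czSign_update_rev_zero hi hb)))

end ControlledZ

section Cluster

variable {n : ℕ}

lemma Cn_mul_op_PZ (i : Fin n) : Cn n * op i PZ = op i PX * Cn n := by
  rw [Cn, mul_assoc, CZall_mul_op_PZ, ← mul_assoc, Hall_mul_op Hg_mul_PZ, mul_assoc]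

lemma Cn_mul_op_PX_zero {i b : Fin n} (hi : (i : ℕ) = 0) (hb : (i : ℕ) + 1 = b) :
    Cn n * op i PX = op i PZ * op b PX * Cn n := by
  rw [Cn, mul_assoc, CZall_mul_op_PX_zero hi hb, ← mul_assoc, ← mul_assoc,
    Hall_mul_op Hg_mul_PX, mul_assoc (op i PZ), Hall_mul_op Hg_mul_PZ]
  simp only [mul_assoc]

lemma Cn_mul_op_PX {a i b : Fin n} (ha : (a : ℕ) + 1 = i) (hb : (i : ℕ) + 1 = b) :
    Cn n * op i PX = op a PX * op i PZ * op b PX * Cn n := by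
  have hai : i ≠ a := fun e => by rw [e] at ha; omega
  rw [Cn, mul_assoc, CZall_mul_op_PX ha hb, ← mul_assoc, ← mul_assoc,
    Hall_mul_op Hg_mul_PX, mul_assoc (op i PZ), ← mul_assoc (Hall n), Hall_mul_op Hg_mul_PZ,
    mul_assoc (op a PX), Hall_mul_op Hg_mul_PZ, ← mul_assoc (op i PZ), op_mul_op_comm hai]
  simp only [mul_assoc]

lemma isUnit_det_Cn : IsUnit (Cn n).det := by
  refine isUnit_det_of_right_inverse (B := CZall n * Hall n) ?_
  rw [Cn, mul_assoc, ← mul_assoc (CZall n), CZall_mul_CZall, one_mul, Hall_mul_Hall]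

lemma Cn_pow_mul_op_PZ_zero (m : ℕ) (hm : m + 2 ≤ n) :
    Cn n ^ (m + 2) * op ⟨0, by omega⟩ PZ
      = op ⟨m, by omega⟩ PZ * op ⟨m + 1, by omega⟩ PX * Cn n ^ (m + 2) := by
  induction m with
  | zero =>
    rw [pow_two, mul_assoc, Cn_mul_op_PZ, ← mul_assoc,
      Cn_mul_op_PX_zero (b := ⟨1, by omega⟩) rfl rfl, mul_assoc]
  | succ m ih =>
    rw [pow_succ', mul_assoc, ih (by omega), ← mul_assoc, ← mul_assoc, Cn_mul_op_PZ,
      mul_assoc (op _ PX),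
      Cn_mul_op_PX (a := ⟨m, by omega⟩) (b := ⟨m + 2, by omega⟩) rfl rfl]
    simp only [← mul_assoc, op_mul_op_self, PX_mul_PX, op_one, one_mul]

end Cluster

theorem cn_propagate_z (n p : ℕ) (hp1 : 1 < p) (hp2 : p < n + 1) :
    Cn n ^ (n - p + 2) * op (⟨0, by omega⟩ : Fin n) PZ * (Cn n ^ (n - p + 2))⁻¹
      = op (⟨n - p, by omega⟩ : Fin n) PZ * op (⟨n - p + 1, by omega⟩ : Fin n) PX := by
  have hunit : IsUnit (Cn n ^ (n - p + 2)).det := by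
    rw [det_pow]; exact isUnit_det_Cn.pow _
  rw [Cn_pow_mul_op_PZ_zero (n - p) (by omega), mul_assoc, mul_nonsing_inv _ hunit, mul_one]
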